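/- arXiv:2201.10057 — 3 statements merged into one kernel-verified Lean document; each statement's English description precedes it below -/
import Mathlib

section
/- Let F be a field, t a positive integer, and H1,…,H9 ∈ F^{4t×t} block matrices. Suppose: (a) the block matrix [H1|H2|H3|H4] has rank 4t; (b) there exist invertible t×t matrices M_{5,1},M_{5,2},M_{5,3} with H5 = H1·M_{5,1}+H2·M_{5,2}+H3·M_{5,3}; similarly H6 = H1·M_{6,1}+H2·M_{6,2}+H4·M_{6,4}, H7 = H1·M_{7,1}+H3·M_{7,3}+H4·M_{7,4}, H8 = H2·M_{8,2}+H3·M_{8,3}+H4·M_{8,4}, with all M invertible; (c) there exist invertible t×t matrices with H9 = H1·M_{9,1}+H8·M_{9,8} = H2·M_{9,2}+H7·M_{9,7} = H3·M_{9,3}+H6·M_{9,6} = H4·M_{9,4}+H5·M_{9,5}; and (d) there exist invertible t×t matrices with H8 = H5·M_{8,5}+H6·M_{8,6}+H7·M_{8,7}. Then F has characteristic 3. -/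
open Matrix in
/-- Uniqueness of coefficients: if `[H1|H2|H3|H4]` has full rank `4t`, then a vanishing
combination `H1*A + H2*B + H3*C + H4*D = 0` forces all coefficient matrices to vanish. -/
lemma aux_unique_rep {F : Type*} [Field F] {t : ℕ}
    (H1 H2 H3 H4 : Matrix (Fin (4*t)) (Fin t) F)
    (hrank : (Matrix.of fun i (p : Fin 4 × Fin t) =>
        ![H1, H2, H3, H4] p.1 i p.2).rank = 4 * t)
    (A B C D : Matrix (Fin t) (Fin t) F)
    (h : H1 * A + H2 * B + H3 * C + H4 * D = 0) :
    A = 0 ∧ B = 0 ∧ C = 0 ∧ D = 0 := by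
  set G : Matrix (Fin (4*t)) (Fin 4 × Fin t) F :=
    Matrix.of fun i (p : Fin 4 × Fin t) => ![H1, H2, H3, H4] p.1 i p.2 with hG
  have hinj : ∀ v : Fin 4 × Fin t → F, G.mulVec v = 0 → v = 0 := by
    have hcard : Module.finrank F (Fin 4 × Fin t → F) = 4 * t := by
      rw [Module.finrank_fintype_fun_eq_card]; simp
    have hrn := LinearMap.finrank_range_add_finrank_ker G.mulVecLin
    rw [hcard] at hrn
    have hker : Module.finrank F (LinearMap.ker G.mulVecLin) = 0 := by
      have hr : G.rank = Module.finrank F (LinearMap.range G.mulVecLin) := rfl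
      rw [hr] at hrank
      omega
    have hbot : LinearMap.ker G.mulVecLin = ⊥ := Submodule.finrank_eq_zero.mp hker
    intro v hv
    have hm : v ∈ LinearMap.ker G.mulVecLin := by
      simpa [LinearMap.mem_ker, Matrix.mulVecLin_apply] using hv
    rw [hbot] at hm
    simpa using hm
  have key : ∀ (c : Fin t) (p : Fin 4 × Fin t), ![A, B, C, D] p.1 p.2 c = 0 := by
    intro c
    have hv : G.mulVec (fun p => ![A, B, C, D] p.1 p.2 c) = 0 := by
      funext i
      have h' := congrFun (congrFun h i) c
      simp only [Matrix.add_apply, Matrix.mul_apply, Matrix.zero_apply] at h'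
      simpa [Matrix.mulVec, dotProduct, hG, Fintype.sum_prod_type,
        Fin.sum_univ_four] using h'
    intro p
    exact congrFun (hinj _ hv) p
  refine ⟨?_, ?_, ?_, ?_⟩ <;> ext k c
  · simpa using key c (0, k)
  · simpa using key c (1, k)
  · simpa using key c (2, k)
  · simpa using key c (3, k)

/-- If blocks `H1,…,H9` over a field `F` satisfy the circuit relations of the matroid
`𝒩₁` (with `[H1|H2|H3|H4]` of full rank `4t` and all coefficient matrices invertible),
then `F` has characteristic 3. -/
theorem matroid_N1_representation_char_three {F : Type*} [Field F] {t : ℕ} (ht : 0 < t)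
    (H1 H2 H3 H4 H5 H6 H7 H8 H9 : Matrix (Fin (4*t)) (Fin t) F)
    (hrank : (Matrix.of fun i (p : Fin 4 × Fin t) =>
        ![H1, H2, H3, H4] p.1 i p.2).rank = 4 * t)
    (hb : ∃ M51 M52 M53 M61 M62 M64 M71 M73 M74 M82 M83 M84 : Matrix (Fin t) (Fin t) F,
      IsUnit M51 ∧ IsUnit M52 ∧ IsUnit M53 ∧ IsUnit M61 ∧ IsUnit M62 ∧ IsUnit M64 ∧
      IsUnit M71 ∧ IsUnit M73 ∧ IsUnit M74 ∧ IsUnit M82 ∧ IsUnit M83 ∧ IsUnit M84 ∧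
      H5 = H1 * M51 + H2 * M52 + H3 * M53 ∧
      H6 = H1 * M61 + H2 * M62 + H4 * M64 ∧
      H7 = H1 * M71 + H3 * M73 + H4 * M74 ∧
      H8 = H2 * M82 + H3 * M83 + H4 * M84)
    (hc : ∃ M91 M92 M93 M94 M95 M96 M97 M98 : Matrix (Fin t) (Fin t) F,
      IsUnit M91 ∧ IsUnit M92 ∧ IsUnit M93 ∧ IsUnit M94 ∧
      IsUnit M95 ∧ IsUnit M96 ∧ IsUnit M97 ∧ IsUnit M98 ∧
      H9 = H1 * M91 + H8 * M98 ∧ H9 = H2 * M92 + H7 * M97 ∧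
      H9 = H3 * M93 + H6 * M96 ∧ H9 = H4 * M94 + H5 * M95)
    (hd : ∃ M85 M86 M87 : Matrix (Fin t) (Fin t) F,
      IsUnit M85 ∧ IsUnit M86 ∧ IsUnit M87 ∧
      H8 = H5 * M85 + H6 * M86 + H7 * M87) :
    CharP F 3 := by
  obtain ⟨M51, M52, M53, M61, M62, M64, M71, M73, M74, M82, M83, M84,
    u51, u52, u53, u61, u62, u64, u71, u73, u74, u82, u83, u84, h5, h6, h7, h8⟩ := hb
  obtain ⟨M91, M92, M93, M94, M95, M96, M97, M98,
    u91, u92, u93, u94, u95, u96, u97, u98, e1, e2, e3, e4⟩ := hc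
  obtain ⟨M85, M86, M87, u85, u86, u87, hd8⟩ := hd
  have rep_eq : ∀ A1 A2 A3 A4 B1 B2 B3 B4 : Matrix (Fin t) (Fin t) F,
      H1 * A1 + H2 * A2 + H3 * A3 + H4 * A4 = H1 * B1 + H2 * B2 + H3 * B3 + H4 * B4 →
      A1 = B1 ∧ A2 = B2 ∧ A3 = B3 ∧ A4 = B4 := by
    intro A1 A2 A3 A4 B1 B2 B3 B4 hAB
    have h0 : H1 * (A1 - B1) + H2 * (A2 - B2) + H3 * (A3 - B3) + H4 * (A4 - B4) = 0 := by
      have hrw : H1 * (A1 - B1) + H2 * (A2 - B2) + H3 * (A3 - B3) + H4 * (A4 - B4)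
          = (H1 * A1 + H2 * A2 + H3 * A3 + H4 * A4)
            - (H1 * B1 + H2 * B2 + H3 * B3 + H4 * B4) := by
        simp only [Matrix.mul_sub]; abel
      rw [hrw, hAB, sub_self]
    obtain ⟨q1, q2, q3, q4⟩ := aux_unique_rep H1 H2 H3 H4 hrank _ _ _ _ h0
    exact ⟨sub_eq_zero.mp q1, sub_eq_zero.mp q2, sub_eq_zero.mp q3, sub_eq_zero.mp q4⟩
  have r1 : H9 = H1 * M91 + H2 * (M82*M98) + H3 * (M83*M98) + H4 * (M84*M98) := by
    rw [e1, h8]; simp only [Matrix.add_mul, Matrix.mul_assoc]; abel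
  have r2 : H9 = H1 * (M71*M97) + H2 * M92 + H3 * (M73*M97) + H4 * (M74*M97) := by
    rw [e2, h7]; simp only [Matrix.add_mul, Matrix.mul_assoc]; abel
  have r3 : H9 = H1 * (M61*M96) + H2 * (M62*M96) + H3 * M93 + H4 * (M64*M96) := by
    rw [e3, h6]; simp only [Matrix.add_mul, Matrix.mul_assoc]; abel
  have r4 : H9 = H1 * (M51*M95) + H2 * (M52*M95) + H3 * (M53*M95) + H4 * M94 := by
    rw [e4, h5]; simp only [Matrix.add_mul, Matrix.mul_assoc]; abel
  have r5 : H1 * (M51*M85 + M61*M86 + M71*M87) + H2 * (M52*M85 + M62*M86)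
      + H3 * (M53*M85 + M73*M87) + H4 * (M64*M86 + M74*M87)
      = H1 * (0 : Matrix (Fin t) (Fin t) F) + H2 * M82 + H3 * M83 + H4 * M84 := by
    have hL : H1 * (M51*M85 + M61*M86 + M71*M87) + H2 * (M52*M85 + M62*M86)
        + H3 * (M53*M85 + M73*M87) + H4 * (M64*M86 + M74*M87)
        = H5 * M85 + H6 * M86 + H7 * M87 := by
      rw [h5, h6, h7]
      simp only [Matrix.add_mul, Matrix.mul_add, Matrix.mul_assoc]
      abel
    rw [hL, ← hd8, h8, Matrix.mul_zero]
    abel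
  obtain ⟨eA1, eB1, eC1, eD1⟩ := rep_eq _ _ _ _ _ _ _ _ (r1.symm.trans r4)
  obtain ⟨eA2, eB2, eC2, eD2⟩ := rep_eq _ _ _ _ _ _ _ _ (r2.symm.trans r4)
  obtain ⟨eA3, eB3, eC3, eD3⟩ := rep_eq _ _ _ _ _ _ _ _ (r3.symm.trans r4)
  obtain ⟨hα, hβ, hγ, hδ⟩ := rep_eq _ _ _ _ _ _ _ _ r5
  have d95 := (Matrix.isUnit_iff_isUnit_det _).mp u95
  have d96 := (Matrix.isUnit_iff_isUnit_det _).mp u96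
  have d97 := (Matrix.isUnit_iff_isUnit_det _).mp u97
  have d98 := (Matrix.isUnit_iff_isUnit_det _).mp u98
  set X := M95⁻¹ * M85 with hX
  set Y := M96⁻¹ * M86 with hY
  set Z := M97⁻¹ * M87 with hZ
  set W := M98⁻¹ with hW
  set N := M51 * M95 with hN
  have f51 : M51 = N * M95⁻¹ := (Matrix.mul_nonsing_inv_cancel_right _ _ d95).symm
  have f61 : M61 = N * M96⁻¹ := by
    rw [← eA3]; exact (Matrix.mul_nonsing_inv_cancel_right _ _ d96).symm
  have f71 : M71 = N * M97⁻¹ := by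
    rw [← eA2]; exact (Matrix.mul_nonsing_inv_cancel_right _ _ d97).symm
  have uN : IsUnit N := by rw [← eA1]; exact u91
  have hXYZ : X + Y + Z = 0 := by
    have h0 : N * (X + Y + Z) = 0 := by
      rw [mul_add, mul_add, hX, hY, hZ, ← mul_assoc, ← mul_assoc, ← mul_assoc,
        ← f51, ← f61, ← f71]
      exact hα
    exact (uN.mul_right_eq_zero).mp h0
  set B' := M52 * M95 with hB'
  have f52 : M52 = B' * M95⁻¹ := (Matrix.mul_nonsing_inv_cancel_right _ _ d95).symm
  have f62 : M62 = B' * M96⁻¹ := by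
    rw [← eB3]; exact (Matrix.mul_nonsing_inv_cancel_right _ _ d96).symm
  have f82 : M82 = B' * M98⁻¹ := by
    rw [← eB1]; exact (Matrix.mul_nonsing_inv_cancel_right _ _ d98).symm
  have uB : IsUnit B' := by rw [← eB2]; exact u92
  have hXY : X + Y = W := by
    have h0 : B' * (X + Y - W) = 0 := by
      rw [mul_sub, mul_add, hX, hY, ← mul_assoc, ← mul_assoc, ← f52, ← f62, hβ, f82, hW]
      abel
    exact sub_eq_zero.mp ((uB.mul_right_eq_zero).mp h0)
  set C' := M53 * M95 with hC'
  have f53 : M53 = C' * M95⁻¹ := (Matrix.mul_nonsing_inv_cancel_right _ _ d95).symm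
  have f73 : M73 = C' * M97⁻¹ := by
    rw [← eC2]; exact (Matrix.mul_nonsing_inv_cancel_right _ _ d97).symm
  have f83 : M83 = C' * M98⁻¹ := by
    rw [← eC1]; exact (Matrix.mul_nonsing_inv_cancel_right _ _ d98).symm
  have uC : IsUnit C' := by rw [← eC3]; exact u93
  have hXZ : X + Z = W := by
    have h0 : C' * (X + Z - W) = 0 := by
      rw [mul_sub, mul_add, hX, hZ, ← mul_assoc, ← mul_assoc, ← f53, ← f73, hγ, f83, hW]
      abel
    exact sub_eq_zero.mp ((uC.mul_right_eq_zero).mp h0)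
  have f64 : M64 = M94 * M96⁻¹ := by
    rw [← eD3]; exact (Matrix.mul_nonsing_inv_cancel_right _ _ d96).symm
  have f74 : M74 = M94 * M97⁻¹ := by
    rw [← eD2]; exact (Matrix.mul_nonsing_inv_cancel_right _ _ d97).symm
  have f84 : M84 = M94 * M98⁻¹ := by
    rw [← eD1]; exact (Matrix.mul_nonsing_inv_cancel_right _ _ d98).symm
  have hYZ : Y + Z = W := by
    have h0 : M94 * (Y + Z - W) = 0 := by
      rw [mul_sub, mul_add, hY, hZ, ← mul_assoc, ← mul_assoc, ← f64, ← f74, hδ, f84, hW]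
      abel
    exact sub_eq_zero.mp ((u94.mul_right_eq_zero).mp h0)
  have hW3 : W + W + W = 0 := by
    have hsum : (X + Y) + (X + Z) + (Y + Z) = 0 := by
      have hre : (X + Y) + (X + Z) + (Y + Z) = (X + Y + Z) + (X + Y + Z) := by abel
      rw [hre, hXYZ, add_zero]
    rw [hXY, hXZ, hYZ] at hsum
    exact hsum
  have h1 : (1 : Matrix (Fin t) (Fin t) F) + 1 + 1 = 0 := by
    have h2 := congrArg (· * M98) hW3
    simpa [add_mul, hW, Matrix.nonsing_inv_mul _ d98] using h2
  have h3F : (1:F) + 1 + 1 = 0 := by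
    have h4 := congrFun (congrFun h1 ⟨0, ht⟩) ⟨0, ht⟩
    simpa [Matrix.add_apply, Matrix.one_apply_eq] using h4
  refine (CharP.charP_iff_prime_eq_zero Nat.prime_three).mpr ?_
  have hc3 : ((3:ℕ):F) = 1 + 1 + 1 := by norm_num
  rw [hc3]; exact h3F
end

section
/- Let F be a field of characteristic 3, t a positive integer, and H1,…,H9 ∈ F^{4t×t}. Suppose: (a) [H1|H2|H3|H4] has rank 4t; (b) H5 = H1·M_{5,1}+H2·M_{5,2}+H3·M_{5,3}, H6 = H1·M_{6,1}+H2·M_{6,2}+H4·M_{6,4}, H7 = H1·M_{7,1}+H3·M_{7,3}+H4·M_{7,4}, H8 = H2·M_{8,2}+H3·M_{8,3}+H4·M_{8,4}, with all M invertible; (c) H9 = H1·M_{9,1}+H8·M_{9,8} = H2·M_{9,2}+H7·M_{9,7} = H3·M_{9,3}+H6·M_{9,6} = H4·M_{9,4}+H5·M_{9,5} with M_{9,5},M_{9,6},M_{9,7},M_{9,8} invertible. Then rank [H5|H6|H7|H8] ≤ 3t; in particular 2·H8·M_{9,8} = H5·M_{9,5} + H6·M_{9,6} + H7·M_{9,7}.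 -/
lemma keyinj {F : Type*} [Field F] {t : ℕ}
    (G : Matrix (Fin (4*t)) (Fin 4 × Fin t) F) (hrank : G.rank = 4 * t)
    (N : Matrix (Fin 4 × Fin t) (Fin t) F) (h : G * N = 0) : N = 0 := by
  have hinj : Function.Injective G.mulVecLin := by
    rw [← LinearMap.ker_eq_bot]
    have hrn := LinearMap.finrank_range_add_finrank_ker G.mulVecLin
    have hdom : Module.finrank F ((Fin 4 × Fin t) → F) = 4 * t := by
      simp [Module.finrank_fintype_fun_eq_card]
    rw [hdom] at hrn
    have hr : Module.finrank F (LinearMap.range G.mulVecLin) = 4 * t := hrank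
    rw [hr] at hrn
    have hker0 : Module.finrank F (LinearMap.ker G.mulVecLin) = 0 := by omega
    exact Submodule.finrank_eq_zero.mp hker0
  ext p l
  have hcol : G.mulVec (fun q => N q l) = G.mulVec 0 := by
    funext i
    have h0 : (G * N) i l = 0 := by rw [h]; simp
    simpa [Matrix.mulVec, Matrix.mul_apply, dotProduct] using h0
  have hcol' : G.mulVecLin (fun q => N q l) = G.mulVecLin 0 := by
    simp only [Matrix.mulVecLin_apply]
    exact hcol
  have := hinj hcol'
  simpa using congrFun this p

lemma key2 {F : Type*} [Field F] {t : ℕ}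
    (H1 H2 H3 H4 : Matrix (Fin (4*t)) (Fin t) F)
    (hrank : (Matrix.of fun i (p : Fin 4 × Fin t) =>
        ![H1, H2, H3, H4] p.1 i p.2).rank = 4 * t)
    {A B C D A' B' C' D' : Matrix (Fin t) (Fin t) F}
    (h : H1*A + H2*B + H3*C + H4*D = H1*A' + H2*B' + H3*C' + H4*D') :
    A = A' ∧ B = B' ∧ C = C' ∧ D = D' := by
  set G : Matrix (Fin (4*t)) (Fin 4 × Fin t) F :=
    Matrix.of fun i (p : Fin 4 × Fin t) => ![H1, H2, H3, H4] p.1 i p.2 with hG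
  set N : Matrix (Fin 4 × Fin t) (Fin t) F :=
    Matrix.of fun (p : Fin 4 × Fin t) l => ![A - A', B - B', C - C', D - D'] p.1 p.2 l with hN
  have hGN : G * N = 0 := by
    ext i l
    have hil : (H1*A + H2*B + H3*C + H4*D) i l = (H1*A' + H2*B' + H3*C' + H4*D') i l := by
      rw [h]
    simp only [Matrix.add_apply, Matrix.mul_apply] at hil
    simp only [hG, hN, Matrix.mul_apply, Matrix.of_apply, Fintype.sum_prod_type,
      Fin.sum_univ_four, Matrix.zero_apply]
    simp only [Matrix.cons_val_zero, Matrix.cons_val_one, Matrix.head_cons,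
      Matrix.cons_val_two, Matrix.tail_cons, Matrix.cons_val_three, Matrix.sub_apply,
      mul_sub, Finset.sum_sub_distrib]
    linear_combination hil
  have hN0 := keyinj G hrank N hGN
  have hval : ∀ (j : Fin 4) (k : Fin t) (l : Fin t),
      (![A - A', B - B', C - C', D - D'] j) k l = 0 := by
    intro j k l
    have := congrFun (congrFun hN0 (j, k)) l
    simpa [hN] using this
  refine ⟨?_, ?_, ?_, ?_⟩
  · ext k l; have := hval 0 k l; simpa [sub_eq_zero] using this
  · ext k l; have := hval 1 k l; simpa [sub_eq_zero] using this
  · ext k l; have := hval 2 k l; simpa [sub_eq_zero] using this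
  · ext k l; have := hval 3 k l; simpa [sub_eq_zero] using this

/-- Over a field of characteristic 3, blocks satisfying the circuit relations of the
matroid `𝒩₂` force `rank [H5|H6|H7|H8] ≤ 3t`; in particular
`2·H8·M₉₈ = H5·M₉₅ + H6·M₉₆ + H7·M₉₇`. -/
theorem matroid_N2_char_three_dependent {F : Type*} [Field F] [CharP F 3] {t : ℕ}
    (ht : 0 < t)
    (H1 H2 H3 H4 H5 H6 H7 H8 H9 : Matrix (Fin (4*t)) (Fin t) F)
    (M51 M52 M53 M61 M62 M64 M71 M73 M74 M82 M83 M84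
      M91 M92 M93 M94 M95 M96 M97 M98 : Matrix (Fin t) (Fin t) F)
    (hrank : (Matrix.of fun i (p : Fin 4 × Fin t) =>
        ![H1, H2, H3, H4] p.1 i p.2).rank = 4 * t)
    (i51 : IsUnit M51) (i52 : IsUnit M52) (i53 : IsUnit M53)
    (i61 : IsUnit M61) (i62 : IsUnit M62) (i64 : IsUnit M64)
    (i71 : IsUnit M71) (i73 : IsUnit M73) (i74 : IsUnit M74)
    (i82 : IsUnit M82) (i83 : IsUnit M83) (i84 : IsUnit M84)
    (h5 : H5 = H1 * M51 + H2 * M52 + H3 * M53)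
    (h6 : H6 = H1 * M61 + H2 * M62 + H4 * M64)
    (h7 : H7 = H1 * M71 + H3 * M73 + H4 * M74)
    (h8 : H8 = H2 * M82 + H3 * M83 + H4 * M84)
    (i95 : IsUnit M95) (i96 : IsUnit M96) (i97 : IsUnit M97) (i98 : IsUnit M98)
    (h9a : H9 = H1 * M91 + H8 * M98) (h9b : H9 = H2 * M92 + H7 * M97)
    (h9c : H9 = H3 * M93 + H6 * M96) (h9d : H9 = H4 * M94 + H5 * M95) :
    (Matrix.of fun i (p : Fin 4 × Fin t) =>
        ![H5, H6, H7, H8] p.1 i p.2).rank ≤ 3 * t ∧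
    (2 : F) • (H8 * M98) = H5 * M95 + H6 * M96 + H7 * M97 := by
  -- compare the four expressions for H9
  have e14 : H1*M91 + H2*(M82*M98) + H3*(M83*M98) + H4*(M84*M98)
      = H1*(M51*M95) + H2*(M52*M95) + H3*(M53*M95) + H4*M94 := by
    have h := h9a.symm.trans h9d
    rw [h8, h5] at h
    simp only [Matrix.add_mul, Matrix.mul_assoc] at h
    rw [← sub_eq_zero] at h ⊢
    rw [← h]; abel
  have e13 : H1*M91 + H2*(M82*M98) + H3*(M83*M98) + H4*(M84*M98)
      = H1*(M61*M96) + H2*(M62*M96) + H3*M93 + H4*(M64*M96) := by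
    have h := h9a.symm.trans h9c
    rw [h8, h6] at h
    simp only [Matrix.add_mul, Matrix.mul_assoc] at h
    rw [← sub_eq_zero] at h ⊢
    rw [← h]; abel
  have e12 : H1*M91 + H2*(M82*M98) + H3*(M83*M98) + H4*(M84*M98)
      = H1*(M71*M97) + H2*M92 + H3*(M73*M97) + H4*(M74*M97) := by
    have h := h9a.symm.trans h9b
    rw [h8, h7] at h
    simp only [Matrix.add_mul, Matrix.mul_assoc] at h
    rw [← sub_eq_zero] at h ⊢
    rw [← h]; abel
  obtain ⟨q1, q2, q3, q4⟩ := key2 H1 H2 H3 H4 hrank e14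
  obtain ⟨r1, r2, r3, r4⟩ := key2 H1 H2 H3 H4 hrank e13
  obtain ⟨s1, s2, s3, s4⟩ := key2 H1 H2 H3 H4 hrank e12
  have h3 : (3 : F) = 0 := by exact_mod_cast CharP.cast_eq_zero F 3
  have hmain : (2 : F) • (H8 * M98) = H5 * M95 + H6 * M96 + H7 * M97 := by
    rw [h5, h6, h7, h8]
    simp only [Matrix.add_mul, Matrix.mul_assoc]
    rw [← q1, ← q2, ← q3, ← r1, ← r2, ← r4, ← s1, ← s3, ← s4]
    ext i l
    simp only [Matrix.add_apply, Matrix.smul_apply, smul_eq_mul]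
    linear_combination (-((H1 * M91) i l)) * h3
  refine ⟨?_, hmain⟩
  -- rank bound
  have hdet : IsUnit M98.det := (Matrix.isUnit_iff_isUnit_det M98).mp i98
  have h2neg : (2 : F) = -1 := by linear_combination h3
  have h8exp : H8 = H5 * (-(M95 * M98⁻¹)) + H6 * (-(M96 * M98⁻¹)) + H7 * (-(M97 * M98⁻¹)) := by
    have hinv : M98 * M98⁻¹ = 1 := Matrix.mul_nonsing_inv M98 hdet
    have h1 : H8 * M98 = -(H5 * M95 + H6 * M96 + H7 * M97) := by
      rw [← hmain, h2neg]
      ext i l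
      simp
    calc H8 = H8 * M98 * M98⁻¹ := by rw [Matrix.mul_assoc, hinv, Matrix.mul_one]
      _ = -(H5 * M95 + H6 * M96 + H7 * M97) * M98⁻¹ := by rw [h1]
      _ = H5 * (-(M95 * M98⁻¹)) + H6 * (-(M96 * M98⁻¹)) + H7 * (-(M97 * M98⁻¹)) := by
          simp only [Matrix.neg_mul, Matrix.add_mul, Matrix.mul_assoc, Matrix.mul_neg]
          abel
  set N5 := -(M95 * M98⁻¹) with hN5
  set N6 := -(M96 * M98⁻¹) with hN6
  set N7 := -(M97 * M98⁻¹) with hN7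
  set G'' : Matrix (Fin (4*t)) (Fin 3 × Fin t) F :=
    Matrix.of fun i (p : Fin 3 × Fin t) => ![H5, H6, H7] p.1 i p.2 with hG''
  set P : Matrix (Fin 3 × Fin t) (Fin 4 × Fin t) F :=
    Matrix.of fun (p : Fin 3 × Fin t) (q : Fin 4 × Fin t) =>
      (![![(1 : Matrix (Fin t) (Fin t) F), 0, 0, N5],
         ![0, 1, 0, N6],
         ![0, 0, 1, N7]] p.1 q.1) p.2 q.2 with hP
  have hfact : (Matrix.of fun i (p : Fin 4 × Fin t) =>
      ![H5, H6, H7, H8] p.1 i p.2) = G'' * P := by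
    ext i ⟨j, l⟩
    have hcol : ∀ (j : Fin 4), (![H5, H6, H7, H8] j) i l =
        ∑ x : Fin t, H5 i x * (![(1 : Matrix (Fin t) (Fin t) F), 0, 0, N5] j) x l +
        ∑ x : Fin t, H6 i x * (![(0 : Matrix (Fin t) (Fin t) F), 1, 0, N6] j) x l +
        ∑ x : Fin t, H7 i x * (![(0 : Matrix (Fin t) (Fin t) F), 0, 1, N7] j) x l := by
      intro j
      fin_cases j
      · simp [Matrix.one_apply, mul_ite, Finset.sum_ite_eq]
      · simp [Matrix.one_apply, mul_ite, Finset.sum_ite_eq]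
      · simp [Matrix.one_apply, mul_ite, Finset.sum_ite_eq]
      · rw [h8exp]
        simp [Matrix.add_apply, Matrix.mul_apply]
    simp only [Matrix.of_apply, Matrix.mul_apply, hG'', hP, Fintype.sum_prod_type,
      Fin.sum_univ_three, Matrix.cons_val_zero, Matrix.cons_val_one, Matrix.head_cons,
      Matrix.cons_val_two, Matrix.tail_cons]
    exact hcol j
  rw [hfact]
  calc (G'' * P).rank ≤ G''.rank := Matrix.rank_mul_le_left G'' P
    _ ≤ Fintype.card (Fin 3 × Fin t) := Matrix.rank_le_card_width G''
    _ = 3 * t := by simp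
end

section
/- Let F be a field and suppose t×t matrices over F satisfy M_{9,1} = M_{5,1}M_{9,5} = M_{6,1}M_{9,6} = M_{7,1}M_{9,7}, M_{9,2} = M_{5,2}M_{9,5} = M_{6,2}M_{9,6} = M_{8,2}M_{9,8}, M_{9,3} = M_{5,3}M_{9,5} = M_{7,3}M_{9,7} = M_{8,3}M_{9,8}, and M_{9,4} = M_{6,4}M_{9,6} = M_{7,4}M_{9,7} = M_{8,4}M_{9,8}, where all matrices M_{5,·}, M_{6,·}, M_{7,·}, M_{8,·} are invertible. If additionally M_{9,8} is invertible, then M_{9,5}, M_{9,6}, M_{9,7} are invertible, and M_{5,1}⁻¹M_{6,1} = M_{5,2}⁻¹M_{6,2}, M_{5,2}⁻¹M_{8,2} = M_{5,3}⁻¹M_{8,3}, and M_{5,1}⁻¹M_{7,1} = M_{5,3}⁻¹M_{7,3}. -/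
private lemma unit_right {F : Type*} [Field F] {t : ℕ}
    {A B : Matrix (Fin t) (Fin t) F} (hA : IsUnit A) (h : IsUnit (A * B)) :
    IsUnit B := by
  rw [Matrix.isUnit_iff_isUnit_det] at *
  rw [Matrix.det_mul] at h
  exact (IsUnit.mul_iff.mp h).2

private lemma inv_mul_eq {F : Type*} [Field F] {t : ℕ}
    {A B C D : Matrix (Fin t) (Fin t) F} (hA : IsUnit A) (hD : IsUnit D)
    (h : A * B = C * D) : A⁻¹ * C = B * D⁻¹ := by
  have hA' := (Matrix.isUnit_iff_isUnit_det A).mp hA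
  have hD' := (Matrix.isUnit_iff_isUnit_det D).mp hD
  calc A⁻¹ * C = A⁻¹ * ((C * D) * D⁻¹) := by
        rw [Matrix.mul_nonsing_inv_cancel_right _ _ hD']
    _ = A⁻¹ * (A * B) * D⁻¹ := by rw [← h]; noncomm_ring
    _ = B * D⁻¹ := by rw [Matrix.nonsing_inv_mul_cancel_left _ _ hA']

/-- Given the coefficient identities of matroid `𝒩₂` with the indicated invertibility
assumptions and `M₉₈` invertible, the matrices `M₉₅, M₉₆, M₉₇` are invertible and the
stated products of inverses agree. -/
theorem coefficient_identities {F : Type*} [Field F] {t : ℕ}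
    (M51 M52 M53 M61 M62 M64 M71 M73 M74 M82 M83 M84
      M91 M92 M93 M94 M95 M96 M97 M98 : Matrix (Fin t) (Fin t) F)
    (i51 : IsUnit M51) (i52 : IsUnit M52) (i53 : IsUnit M53)
    (i61 : IsUnit M61) (i62 : IsUnit M62) (i64 : IsUnit M64)
    (i71 : IsUnit M71) (i73 : IsUnit M73) (i74 : IsUnit M74)
    (i82 : IsUnit M82) (i83 : IsUnit M83) (i84 : IsUnit M84)
    (e1a : M91 = M51 * M95) (e1b : M91 = M61 * M96) (e1c : M91 = M71 * M97)
    (e2a : M92 = M52 * M95) (e2b : M92 = M62 * M96) (e2c : M92 = M82 * M98)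
    (e3a : M93 = M53 * M95) (e3b : M93 = M73 * M97) (e3c : M93 = M83 * M98)
    (e4a : M94 = M64 * M96) (e4b : M94 = M74 * M97) (e4c : M94 = M84 * M98)
    (i98 : IsUnit M98) :
    IsUnit M95 ∧ IsUnit M96 ∧ IsUnit M97 ∧
    M51⁻¹ * M61 = M52⁻¹ * M62 ∧
    M52⁻¹ * M82 = M53⁻¹ * M83 ∧
    M51⁻¹ * M71 = M53⁻¹ * M73 := by
  have h94 : IsUnit M94 := e4c ▸ i84.mul i98
  have i97 : IsUnit M97 := unit_right i74 (e4b ▸ h94)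
  have i96 : IsUnit M96 := unit_right i64 (e4a ▸ h94)
  have h93 : IsUnit M93 := e3b ▸ i73.mul i97
  have i95 : IsUnit M95 := unit_right i53 (e3a ▸ h93)
  refine ⟨i95, i96, i97, ?_, ?_, ?_⟩
  · rw [inv_mul_eq i51 i96 (e1a ▸ e1b), inv_mul_eq i52 i96 (e2a ▸ e2b)]
  · rw [inv_mul_eq i52 i98 (e2a ▸ e2c), inv_mul_eq i53 i98 (e3a ▸ e3c)]
  · rw [inv_mul_eq i51 i97 (e1a ▸ e1c), inv_mul_eq i53 i97 (e3a ▸ e3b)]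
end
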